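/- Let V be a vector space over a field K with linearly independent vectors v₁, v₂, v₃, v₄, and let W = Λ²V / ⟨v₁∧v₂ − v₃∧v₄⟩ with β : V × V → W the composition of ∧ with the quotient map. Then for any two linearly independent vectors v, v' in the span of {v₁,v₂,v₃,v₄}, β(v, v') ≠ 0. -/

import Mathlib

open ExteriorAlgebra

/-!
If `v ∧ v' = c • (v₁ ∧ v₂ - v₃ ∧ v₄)`, contracting with a linear form `d` gives, in `V`,
`d v • v' - d v' • v = c • ((d v₁ • v₂ - d v₂ • v₁) - (d v₃ • v₄ - d v₄ • v₃))`.
For `c ≠ 0`, taking for `d` the coordinate forms of `v₁, …, v₄` puts all four vectors in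
`span {v, v'}`, which is impossible; for `c = 0`, a form with `d v ≠ 0` makes `v, v'` dependent.
-/

theorem LinearIndependent.exists_dual_apply_eq_ite {K V ι : Type*} [Field K] [AddCommGroup V]
    [Module K V] [DecidableEq ι] {w : ι → V} (hw : LinearIndependent K w) :
    ∃ φ : ι → Module.Dual K V, ∀ i j, φ i (w j) = if i = j then 1 else 0 := by
  let b := Module.Basis.span hw
  choose φ hφ using fun i => LinearMap.exists_extend (b.coord i)
  refine ⟨φ, fun i j => ?_⟩
  have hbj : w j = (b j : V) := by rw [Module.Basis.span_apply]
  rw [hbj, ← Submodule.subtype_apply, ← LinearMap.comp_apply, hφ,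
    Module.Basis.coord_apply, Module.Basis.repr_self, Finsupp.single_apply]
  exact if_congr eq_comm rfl rfl

theorem LinearIndependent.not_of_forall_mem_span_pair {K V ι : Type*} [Field K] [AddCommGroup V]
    [Module K V] [Fintype ι] (hι : 2 < Fintype.card ι) {w : ι → V} {x y : V}
    (hw : ∀ i, w i ∈ Submodule.span K {x, y}) : ¬ LinearIndependent K w := by
  intro hli
  have hle : Submodule.span K (Set.range w) ≤ Submodule.span K (Set.range ![x, y]) := by
    rw [Submodule.span_le, Matrix.range_cons, Matrix.range_cons, Matrix.range_empty,
      Set.union_empty, ← Set.insert_eq]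
    rintro _ ⟨i, rfl⟩
    exact hw i
  have := Module.Finite.span_of_finite K (Set.finite_range ![x, y])
  have := calc
    Fintype.card ι ≤ (Set.range w).finrank K := linearIndependent_iff_card_le_finrank_span.mp hli
    _ ≤ (Set.range ![x, y]).finrank K := Submodule.finrank_mono hle
    _ ≤ 2 := by simpa using finrank_range_le_card (R := K) ![x, y]
  omega

namespace ExteriorAlgebra

theorem contractLeft_ι_mul_ι {R M : Type*} [CommRing R] [AddCommGroup M] [Module R M]
    (d : Module.Dual R M) (x y : M) :
    CliffordAlgebra.contractLeft (Q := 0) d (ι R x * ι R y) = ι R (d x • y - d y • x) := by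
  rw [CliffordAlgebra.contractLeft_ι_mul, CliffordAlgebra.contractLeft_ι,
    Algebra.algebraMap_eq_smul_one, mul_smul_comm, mul_one, map_sub, map_smul, map_smul]

variable {K V : Type*} [Field K] [AddCommGroup V] [Module K V]

theorem ι_mul_ι_ne_zero {x y : V} (h : LinearIndependent K ![x, y]) : ι K x * ι K y ≠ 0 := by
  intro hxy
  obtain ⟨d, hd⟩ : ∃ d : Module.Dual K V, d x ≠ 0 := by
    by_contra! hx
    exact h.ne_zero 0 ((Module.forall_dual_apply_eq_zero_iff K x).mp hx)
  have hcomb : -d y • x + d x • y = 0 := by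
    have := congrArg (CliffordAlgebra.contractLeft (Q := 0) d) hxy
    rwa [contractLeft_ι_mul_ι, map_zero, ι_eq_zero_iff, sub_eq_neg_add, ← neg_smul] at this
  exact hd (LinearIndependent.pair_iff.mp h _ _ hcomb).2

theorem ι_mul_ι_ne_smul_sub {w : Fin 4 → V} (hw : LinearIndependent K w) {c : K} (hc : c ≠ 0)
    (x y : V) : ι K x * ι K y ≠ c • (ι K (w 0) * ι K (w 1) - ι K (w 2) * ι K (w 3)) := by
  intro h
  obtain ⟨φ, hφ⟩ := hw.exists_dual_apply_eq_ite
  have hmem : ∀ k, c • ((φ k (w 0) • w 1 - φ k (w 1) • w 0) - (φ k (w 2) • w 3 - φ k (w 3) • w 2))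
      ∈ Submodule.span K {x, y} := by
    intro k
    have hk := congrArg (CliffordAlgebra.contractLeft (Q := 0) (φ k)) h
    rw [map_smul, map_sub, contractLeft_ι_mul_ι, contractLeft_ι_mul_ι, contractLeft_ι_mul_ι,
      ← map_sub, ← map_smul, ι_inj] at hk
    rw [← hk]
    exact sub_mem (Submodule.smul_mem _ _ (Submodule.subset_span (by simp)))
      (Submodule.smul_mem _ _ (Submodule.subset_span (by simp)))
  refine LinearIndependent.not_of_forall_mem_span_pair (x := x) (y := y) (by simp) (fun i => ?_) hw
  fin_cases i
  · simpa [hφ, hc, Submodule.smul_mem_iff] using hmem 1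
  · simpa [hφ, hc, Submodule.smul_mem_iff] using hmem 0
  · simpa [hφ, hc, Submodule.smul_mem_iff] using hmem 3
  · simpa [hφ, hc, Submodule.smul_mem_iff] using hmem 2

end ExteriorAlgebra

/-- Let `v₁,…,v₄ ∈ V` be linearly independent and let `W = Λ²V / ⟨v₁∧v₂ − v₃∧v₄⟩`, with
`β` induced by the wedge product. Then `β(v,v') ≠ 0` for any two linearly independent
vectors `v, v'` in the span of `{v₁,v₂,v₃,v₄}`. -/
theorem quotient_wedge_nonzero_on_independent_pairs (K V : Type*) [Field K]
    [AddCommGroup V] [Module K V] (v₁ v₂ v₃ v₄ : V)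
    (hv : LinearIndependent K ![v₁, v₂, v₃, v₄]) :
    ∀ v v' : V, v ∈ Submodule.span K {v₁, v₂, v₃, v₄} →
      v' ∈ Submodule.span K {v₁, v₂, v₃, v₄} →
      LinearIndependent K ![v, v'] →
      (Submodule.span K {ι K v₁ * ι K v₂ - ι K v₃ * ι K v₄} :
          Submodule K (ExteriorAlgebra K V)).mkQ (ι K v * ι K v') ≠ 0 := by
  intro v v' _ _ hind hzero
  rw [Submodule.mkQ_apply, Submodule.Quotient.mk_eq_zero, Submodule.mem_span_singleton] at hzero
  obtain ⟨c, hc⟩ := hzero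
  rcases eq_or_ne c 0 with rfl | hc0
  · exact ι_mul_ι_ne_zero hind (by rw [← hc, zero_smul])
  · exact ι_mul_ι_ne_smul_sub hv hc0 v v' hc.symm
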